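/- arXiv:2103.15676 — 4 statements merged into one kernel-verified Lean document; each statement's English description precedes it below -/
import Mathlib

section
/- Let G be a finite connected multigraph with a positive length ℓ_h > 0 assigned to each half-edge h, with ℓ_{-h} = ℓ_h. For each cut b, let m(b) = {h ∈ b : ℓ_h = min_{k∈b} ℓ_k} and define mdiv_b(φ) = ∑_{h ∈ m(b)} φ(h) for antisymmetric φ. Then the linear map mdiv : 𝓐 → ℝ^{|B|}, φ ↦ (mdiv_b(φ))_{b∈B}, has rank exactly |V| - 1. -/
namespace PaperGraph

variable {H V : Type*}

/-- The subspace of antisymmetric functions on half-edges. -/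
def asymSpace (ι : H → H) : Submodule ℝ (H → ℝ) where
  carrier := {f | ∀ h, f (ι h) = - f h}
  add_mem' := by
    intro a b ha hb h
    simp only [Pi.add_apply, ha h, hb h]
    ring
  zero_mem' := by intro h; simp
  smul_mem' := by
    intro c a ha h
    simp only [Pi.smul_apply, ha h, smul_eq_mul]
    ring

/-- Connectedness of the multigraph with half-edge set `H`, involution `ι`
and initial-vertex map `vmap`. -/
def Connected (ι : H → H) (vmap : H → V) : Prop :=
  ∀ a b : V, Relation.ReflTransGen (fun u w => ∃ h, vmap h = u ∧ vmap (ι h) = w) a b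

/-- The characteristic vector `a_b` of the cut determined by the vertex set `S`. -/
def cutFun [DecidableEq V] (ι : H → H) (vmap : H → V) (S : Finset V) : H → ℝ :=
  fun h => (if vmap h ∈ S then (1:ℝ) else 0) - (if vmap (ι h) ∈ S then (1:ℝ) else 0)

/-- The cut space `𝓑`. -/
def cutSpace [DecidableEq V] (ι : H → H) (vmap : H → V) : Submodule ℝ (H → ℝ) :=
  Submodule.span ℝ (Set.range (cutFun ι vmap))

/-- The characteristic vector `a_c = ∑_{h∈c} (e_h - e_{-h})` of a cycle. -/
def cycFun [Fintype H] [DecidableEq H] (ι : H → H) {n : ℕ} (c : ZMod (n+1) → H) : H → ℝ :=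
  fun k => ∑ i : ZMod (n+1), ((if c i = k then (1:ℝ) else 0) - (if ι (c i) = k then (1:ℝ) else 0))

/-- A simple cycle: a cyclic sequence of half-edges, consecutively incident,
visiting pairwise distinct vertices. -/
def IsCycle (ι : H → H) (vmap : H → V) {n : ℕ} (c : ZMod (n+1) → H) : Prop :=
  Function.Injective (fun i => vmap (c i)) ∧ ∀ i, vmap (ι (c i)) = vmap (c (i+1))

/-- The cycle space `𝓒`. -/
def cycleSpace [Fintype H] [DecidableEq H] (ι : H → H) (vmap : H → V) : Submodule ℝ (H → ℝ) :=
  Submodule.span ℝ {g | ∃ (n : ℕ) (c : ZMod (n+1) → H), IsCycle ι vmap c ∧ g = cycFun ι c}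

/-- The set of half-edges in the cut from `S` to its complement. -/
def cutset [Fintype H] [DecidableEq V] (ι : H → H) (vmap : H → V) (S : Finset V) : Finset H :=
  Finset.univ.filter (fun h => vmap h ∈ S ∧ vmap (ι h) ∉ S)

/-- The set `m(b)` of minimal-length half-edges in the cut determined by `S`. -/
noncomputable def minCut [Fintype H] [DecidableEq V] (ι : H → H) (vmap : H → V) (ℓ : H → ℝ) (S : Finset V) :
    Finset H :=
  (cutset ι vmap S).filter (fun h => ∀ k ∈ cutset ι vmap S, ℓ h ≤ ℓ k)

/-- The discrete gradient `grad(f)(h) = f(v(-h)) - f(v(h))`. -/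
def gradFun (ι : H → H) (vmap : H → V) (f : V → ℝ) : H → ℝ :=
  fun h => f (vmap (ι h)) - f (vmap h)

end PaperGraph

open PaperGraph

/-- The linear map `mdiv`, sending `φ` to the family of sums of `φ` over the
minimal-length half-edges of each cut. -/
noncomputable def mdivMap {H V : Type*} [Fintype H] [DecidableEq V]
    (ι : H → H) (vmap : H → V) (ℓ : H → ℝ) : (H → ℝ) →ₗ[ℝ] (Finset V → ℝ) where
  toFun φ := fun S => ∑ h ∈ minCut ι vmap ℓ S, φ h
  map_add' := by
    intro φ ψ
    funext S
    simp [Finset.sum_add_distrib]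
  map_smul' := by
    intro c φ
    funext S
    simp [Finset.mul_sum]

/-!
Lower bound: restricted to gradients, `mdiv` vanishes only on constants. Indeed, on the set `S`
where `f` attains its maximum, every minimal-length half-edge leaving `S` strictly decreases `f`,
so the `S`-coordinate of `mdiv (grad f)` is negative unless `f` is constant.

Upper bound: by antisymmetry, `2 mdiv_S φ = ⟨w_S, φ⟩`, where `w_S` is the cut vector of `S`
restricted to the half-edges of the minimal length `t` of the cut. Since no edge shorter than `t`
crosses the cut, `w_S` is the level-`t` part of the gradient of a function in `E_{<t}`, the
functions constant along all edges shorter than `t`. The level-`t` gradients of `E_{<t}` span a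
space of dimension at most `dim E_{<t} - dim E_{≤t}`, and summing over all lengths telescopes to
at most `|V| - 1`, the constants lying in every `E`.
-/

namespace PaperGraph

open Finset Module

section LinearAlgebra

variable {K W M : Type*} [Field K] [AddCommGroup W] [Module K W] [AddCommGroup M] [Module K M]

theorem finrank_map_add_finrank_le {E E' : Submodule K W} [FiniteDimensional K E]
    (g : W →ₗ[K] M) (hE' : E' ≤ E ⊓ LinearMap.ker g) :
    finrank K (E.map g) + finrank K E' ≤ finrank K E := by
  have hrange : LinearMap.range (g.domRestrict E) = E.map g := by
    rw [LinearMap.domRestrict, LinearMap.range_comp, Submodule.range_subtype]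
  have hker : finrank K E' ≤ finrank K (LinearMap.ker (g.domRestrict E)) := by
    rw [← (Submodule.comapSubtypeEquivOfLe (hE'.trans inf_le_left)).finrank_eq]
    exact Submodule.finrank_mono fun x hx => (hE' hx).2
  have hrn := (g.domRestrict E).finrank_range_add_finrank_ker
  rw [hrange] at hrn
  omega

theorem finrank_sup_map_add_finrank_le {α : Type*} [LinearOrder α] [FiniteDimensional K W]
    (E : α → Submodule K W) (g : α → W →ₗ[K] M)
    (hE : ∀ t x, t < x → E x ≤ E t ⊓ LinearMap.ker (g t)) (s : Finset α) (x : α)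
    (hx : ∀ t ∈ s, t < x) :
    finrank K ↥(s.sup fun t => (E t).map (g t)) + finrank K (E x) ≤ finrank K W := by
  classical
  induction s using Finset.induction_on_max generalizing x with
  | empty =>
    rw [Finset.sup_empty]
    simpa using Submodule.finrank_le (E x)
  | insert a s has ih =>
    rw [Finset.sup_insert]
    have hsup := Submodule.finrank_add_le_finrank_add_finrank ((E a).map (g a))
      (s.sup fun t => (E t).map (g t))
    have hstep := finrank_map_add_finrank_le (g a) (hE a x (hx a (mem_insert_self a s)))
    have hs := ih a has
    omega

theorem finrank_range_le_of_forall_exists_mem {I : Type*} (B : W →ₗ[K] M →ₗ[K] K)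
    (U : Submodule K W) [FiniteDimensional K U] (F : M →ₗ[K] I → K)
    (hF : ∀ i, ∃ w ∈ U, ∀ φ, F φ i = B w φ) :
    finrank K (LinearMap.range F) ≤ finrank K U := by
  choose w hw hFw using hF
  let evalAt : Dual K U →ₗ[K] I → K := LinearMap.pi fun i => Dual.eval K U ⟨w i, hw i⟩
  have hle : LinearMap.range F ≤ LinearMap.range evalAt := by
    rintro _ ⟨φ, rfl⟩
    exact ⟨(B.flip φ).comp U.subtype, funext fun i => (hFw i φ).symm⟩
  calc finrank K (LinearMap.range F) ≤ finrank K (LinearMap.range evalAt) :=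
        Submodule.finrank_mono hle
    _ ≤ finrank K (Dual K U) := LinearMap.finrank_range_le _
    _ = finrank K U := Subspace.dual_finrank_eq

end LinearAlgebra

variable {H V : Type*} (ι : H → H) (vmap : H → V) (ℓ : H → ℝ)

def gradLin : (V → ℝ) →ₗ[ℝ] H → ℝ where
  toFun := gradFun ι vmap
  map_add' f g := by ext h; simp only [gradFun, Pi.add_apply]; ring
  map_smul' c f := by
    ext h
    simp only [gradFun, Pi.smul_apply, smul_eq_mul, RingHom.id_apply]
    ring

theorem gradFun_mem_asymSpace (hinv : ∀ h, ι (ι h) = h) (f : V → ℝ) :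
    gradFun ι vmap f ∈ asymSpace ι := fun h => by
  simp only [gradFun, hinv]
  ring

noncomputable def levelGrad (t : ℝ) : (V → ℝ) →ₗ[ℝ] H → ℝ :=
  LinearMap.pi fun h => if ℓ h = t then (LinearMap.proj h).comp (gradLin ι vmap) else 0

theorem levelGrad_apply (t : ℝ) (f : V → ℝ) (h : H) :
    levelGrad ι vmap ℓ t f h = if ℓ h = t then gradFun ι vmap f h else 0 := by
  by_cases ht : ℓ h = t <;> simp [levelGrad, ht, gradLin]

/-- `E_{<t}`: the functions constant on the components of the subgraph of edges shorter
than `t`. -/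
def constBelow (t : ℝ) : Submodule ℝ (V → ℝ) where
  carrier := {f | ∀ h, ℓ h < t → gradFun ι vmap f h = 0}
  add_mem' hf hg h ht := by simp only [gradFun, Pi.add_apply] at *; linarith [hf h ht, hg h ht]
  zero_mem' h _ := by simp [gradFun]
  smul_mem' c f hf h ht := by
    simp only [gradFun, Pi.smul_apply] at *
    rw [← smul_sub, hf h ht, smul_zero]

theorem constBelow_le_inf_ker {t x : ℝ} (htx : t < x) :
    constBelow ι vmap ℓ x ≤ constBelow ι vmap ℓ t ⊓ LinearMap.ker (levelGrad ι vmap ℓ t) := by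
  intro f hf
  refine ⟨fun h ht => hf h (ht.trans htx), funext fun h => ?_⟩
  rw [levelGrad_apply]
  split_ifs with ht
  · exact hf h (ht ▸ htx)
  · rfl

variable [Fintype H]

noncomputable def levelGradSpace : Submodule ℝ (H → ℝ) :=
  (univ.image ℓ).sup fun t => (constBelow ι vmap ℓ t).map (levelGrad ι vmap ℓ t)

theorem finrank_levelGradSpace_le [Fintype V] :
    finrank ℝ (levelGradSpace ι vmap ℓ) ≤ Fintype.card V - 1 := by
  obtain ⟨x₀, hx₀⟩ := (univ.image ℓ).exists_le
  have htele := finrank_sup_map_add_finrank_le (constBelow ι vmap ℓ) (levelGrad ι vmap ℓ)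
    (fun _ _ => constBelow_le_inf_ker ι vmap ℓ) (univ.image ℓ) (x₀ + 1)
    (fun t ht => (hx₀ t ht).trans_lt (lt_add_one x₀))
  rw [Module.finrank_pi] at htele
  have hconst : 0 < Fintype.card V → 1 ≤ finrank ℝ (constBelow ι vmap ℓ (x₀ + 1)) := by
    intro hV
    obtain ⟨v⟩ := Fintype.card_pos_iff.mp hV
    have hone : (fun _ => 1 : V → ℝ) ≠ 0 := fun h => one_ne_zero (congrFun h v)
    rw [← finrank_span_singleton (K := ℝ) hone]
    refine Submodule.finrank_mono ((Submodule.span_singleton_le_iff_mem _ _).mpr ?_)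
    intro h _
    simp [gradFun]
  unfold levelGradSpace
  omega

theorem sum_indicator_sub_mul_eq [DecidableEq H] (hinv : ∀ h, ι (ι h) = h) {φ : H → ℝ}
    (hφ : φ ∈ asymSpace ι) (m : Finset H) :
    ∑ h, ((if h ∈ m then 1 else 0) - (if ι h ∈ m then 1 else 0)) * φ h = 2 * ∑ h ∈ m, φ h := by
  have hanti : ∀ h, φ (ι h) = -φ h := hφ
  have hswap : ∑ h, (if ι h ∈ m then 1 else 0) * φ h = -∑ h ∈ m, φ h := by
    rw [← Equiv.sum_comp (Function.Involutive.toPerm ι hinv)]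
    change ∑ h, (if ι (ι h) ∈ m then 1 else 0) * φ (ι h) = _
    simp only [hinv, hanti, mul_neg, sum_neg_distrib, ite_mul, one_mul, zero_mul, sum_ite_mem,
      univ_inter]
  simp only [sub_mul, sum_sub_distrib]
  rw [hswap]
  simp only [ite_mul, one_mul, zero_mul, sum_ite_mem, univ_inter]
  ring

variable [DecidableEq V]

theorem mem_cutset {S : Finset V} {h : H} :
    h ∈ cutset ι vmap S ↔ vmap h ∈ S ∧ vmap (ι h) ∉ S := by
  simp [cutset]

theorem cutset_nonempty (hconn : Connected ι vmap) {S : Finset V} {a b : V} (ha : a ∈ S)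
    (hb : b ∉ S) : (cutset ι vmap S).Nonempty := by
  induction hconn a b with
  | refl => exact absurd ha hb
  | @tail c d _ hcd ih =>
    by_cases hc : c ∈ S
    · obtain ⟨h, rfl, rfl⟩ := hcd
      exact ⟨h, (mem_cutset ι vmap).mpr ⟨hc, hb⟩⟩
    · exact ih hc

theorem mem_minCut {S : Finset V} {h : H} :
    h ∈ minCut ι vmap ℓ S ↔ h ∈ cutset ι vmap S ∧ ∀ k ∈ cutset ι vmap S, ℓ h ≤ ℓ k := by
  rw [minCut, mem_filter]

theorem minCut_nonempty {S : Finset V} (hS : (cutset ι vmap S).Nonempty) :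
    (minCut ι vmap ℓ S).Nonempty := by
  obtain ⟨h, hh, hmin⟩ := exists_min_image _ ℓ hS
  exact ⟨h, (mem_minCut ι vmap ℓ).mpr ⟨hh, hmin⟩⟩

theorem eq_of_forall_sum_minCut_gradFun_eq_zero [Fintype V] (hconn : Connected ι vmap)
    {f : V → ℝ} (hf : ∀ S, ∑ h ∈ minCut ι vmap ℓ S, gradFun ι vmap f h = 0) (v w : V) :
    f v = f w := by
  obtain ⟨v₀, -, hmax⟩ := exists_max_image univ f ⟨v, mem_univ v⟩
  suffices hconst : ∀ u, f u = f v₀ by rw [hconst v, hconst w]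
  by_contra! ⟨u, hu⟩
  set S := univ.filter fun u => f u = f v₀
  have hneg : ∀ h ∈ minCut ι vmap ℓ S, gradFun ι vmap f h < 0 := by
    intro h hh
    obtain ⟨hin, hout⟩ := (mem_cutset ι vmap).mp ((mem_minCut ι vmap ℓ).mp hh).1
    simp only [S, mem_filter, mem_univ, true_and] at hin hout
    rw [gradFun, hin, sub_neg]
    exact lt_of_le_of_ne (hmax _ (mem_univ _)) hout
  have hS := cutset_nonempty ι vmap hconn (S := S) (a := v₀) (by simp [S])
    (by simpa [S] using hu)
  exact (sum_neg hneg (minCut_nonempty ι vmap ℓ hS)).ne (hf S)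

theorem mem_minCut_iff_length_eq {S : Finset V} {h₀ : H} (hh₀ : h₀ ∈ cutset ι vmap S)
    (hmin : ∀ k ∈ cutset ι vmap S, ℓ h₀ ≤ ℓ k) {h : H} :
    h ∈ minCut ι vmap ℓ S ↔ h ∈ cutset ι vmap S ∧ ℓ h = ℓ h₀ := by
  rw [mem_minCut]
  exact ⟨fun ⟨hh, hle⟩ => ⟨hh, (hle h₀ hh₀).antisymm (hmin h hh)⟩,
    fun ⟨hh, heq⟩ => ⟨hh, heq ▸ hmin⟩⟩

theorem indicator_compl_mem_constBelow (hinv : ∀ h, ι (ι h) = h) (hℓsym : ∀ h, ℓ (ι h) = ℓ h)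
    {S : Finset V} {t : ℝ} (hmin : ∀ k ∈ cutset ι vmap S, t ≤ ℓ k) :
    (fun v => if v ∈ S then 0 else 1) ∈ constBelow ι vmap ℓ t := by
  intro h ht
  have hout : h ∉ cutset ι vmap S := fun hc => (hmin h hc).not_gt ht
  have hin : ι h ∉ cutset ι vmap S := fun hc => (hmin _ hc).not_gt (by rwa [hℓsym])
  rw [mem_cutset] at hout hin
  rw [hinv] at hin
  simp only [gradFun]
  split_ifs <;> simp_all

theorem levelGrad_indicator_compl [DecidableEq H] (hinv : ∀ h, ι (ι h) = h)
    (hℓsym : ∀ h, ℓ (ι h) = ℓ h)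
    {S : Finset V} {h₀ : H} (hh₀ : h₀ ∈ cutset ι vmap S)
    (hmin : ∀ k ∈ cutset ι vmap S, ℓ h₀ ≤ ℓ k) (h : H) :
    levelGrad ι vmap ℓ (ℓ h₀) (fun v => if v ∈ S then 0 else 1) h =
      (if h ∈ minCut ι vmap ℓ S then 1 else 0) - (if ι h ∈ minCut ι vmap ℓ S then 1 else 0) := by
  simp only [levelGrad_apply, mem_minCut_iff_length_eq ι vmap ℓ hh₀ hmin, mem_cutset, hinv,
    hℓsym, gradFun]
  by_cases hℓ : ℓ h = ℓ h₀ <;> by_cases h1 : vmap h ∈ S <;> by_cases h2 : vmap (ι h) ∈ S <;>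
    simp [hℓ, h1, h2]

theorem exists_mem_levelGradSpace_sum_minCut_eq [DecidableEq H] (hinv : ∀ h, ι (ι h) = h)
    (hℓsym : ∀ h, ℓ (ι h) = ℓ h) (S : Finset V) :
    ∃ w ∈ levelGradSpace ι vmap ℓ, ∀ φ ∈ asymSpace ι, ∑ h ∈ minCut ι vmap ℓ S, φ h = w ⬝ᵥ φ := by
  rcases (cutset ι vmap S).eq_empty_or_nonempty with hS | hS
  · exact ⟨0, zero_mem _, fun φ _ => by simp [minCut, hS]⟩
  obtain ⟨h₀, hh₀, hmin⟩ := exists_min_image _ ℓ hS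
  set f : V → ℝ := fun v => if v ∈ S then 0 else 1
  have hw : levelGrad ι vmap ℓ (ℓ h₀) f ∈ levelGradSpace ι vmap ℓ :=
    le_sup (f := fun t => (constBelow ι vmap ℓ t).map (levelGrad ι vmap ℓ t))
      (mem_image_of_mem ℓ (mem_univ h₀))
      ⟨f, indicator_compl_mem_constBelow ι vmap ℓ hinv hℓsym hmin, rfl⟩
  refine ⟨(2:ℝ)⁻¹ • levelGrad ι vmap ℓ (ℓ h₀) f, Submodule.smul_mem _ _ hw, fun φ hφ => ?_⟩
  rw [smul_dotProduct, dotProduct,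
    funext (levelGrad_indicator_compl ι vmap ℓ hinv hℓsym hh₀ hmin),
    sum_indicator_sub_mul_eq ι hinv hφ, smul_eq_mul, inv_mul_cancel_left₀ two_ne_zero]

theorem finrank_range_mdiv_le [Fintype V] [DecidableEq H] (hinv : ∀ h, ι (ι h) = h)
    (hℓsym : ∀ h, ℓ (ι h) = ℓ h) :
    finrank ℝ (LinearMap.range ((mdivMap ι vmap ℓ).comp (asymSpace ι).subtype)) ≤
      Fintype.card V - 1 := by
  refine (finrank_range_le_of_forall_exists_mem
    ((dotProductBilin ℝ ℝ).compl₂ (asymSpace ι).subtype) (levelGradSpace ι vmap ℓ) _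
    fun S => ?_).trans (finrank_levelGradSpace_le ι vmap ℓ)
  obtain ⟨w, hw, hsum⟩ := exists_mem_levelGradSpace_sum_minCut_eq ι vmap ℓ hinv hℓsym S
  exact ⟨w, hw, fun φ => hsum φ φ.2⟩

theorem card_sub_one_le_finrank_range_mdiv [Fintype V] (hinv : ∀ h, ι (ι h) = h)
    (hconn : Connected ι vmap) :
    Fintype.card V - 1 ≤
      finrank ℝ (LinearMap.range ((mdivMap ι vmap ℓ).comp (asymSpace ι).subtype)) := by
  rcases isEmpty_or_nonempty V with hV | ⟨⟨v₀⟩⟩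
  · simp [Fintype.card_eq_zero]
  set F := (mdivMap ι vmap ℓ).comp (asymSpace ι).subtype
  set G := (gradLin ι vmap).codRestrict (asymSpace ι) (gradFun_mem_asymSpace ι vmap hinv)
  have hker : LinearMap.ker (F.comp G) ≤ Submodule.span ℝ {fun _ => 1} := fun f hf =>
    Submodule.mem_span_singleton.mpr ⟨f v₀, funext fun v => by
      simpa using eq_of_forall_sum_minCut_gradFun_eq_zero ι vmap ℓ hconn
        (fun S => congrFun hf S) v₀ v⟩
  have hker_le : finrank ℝ (LinearMap.ker (F.comp G)) ≤ 1 := by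
    simpa using (Submodule.finrank_mono hker).trans (finrank_span_le_card _)
  have hrange := Submodule.finrank_mono (LinearMap.range_comp_le_range G F)
  have hrn := (F.comp G).finrank_range_add_finrank_ker
  rw [finrank_pi] at hrn
  omega

end PaperGraph

theorem statement4_general {H V : Type*} [Fintype H] [DecidableEq H] [Fintype V] [DecidableEq V]
    (ι : H → H) (vmap : H → V) (ℓ : H → ℝ)
    (hinv : ∀ h, ι (ι h) = h)
    (hconn : Connected ι vmap)
    (hℓsym : ∀ h, ℓ (ι h) = ℓ h) :
    Module.finrank ℝ
      (LinearMap.range ((mdivMap ι vmap ℓ).comp (asymSpace ι).subtype)) =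
      Fintype.card V - 1 :=
  le_antisymm (finrank_range_mdiv_le ι vmap ℓ hinv hℓsym)
    (card_sub_one_le_finrank_range_mdiv ι vmap ℓ hinv hconn)

/-- For a finite connected multigraph with symmetric positive
edge lengths, the map `mdiv : 𝓐 → ℝ^{|B|}` has rank exactly `|V| - 1`. -/
theorem statement4 {H V : Type*} [Fintype H] [DecidableEq H] [Fintype V] [DecidableEq V]
    (ι : H → H) (vmap : H → V) (ℓ : H → ℝ)
    (hinv : ∀ h, ι (ι h) = h) (hfree : ∀ h, ι h ≠ h)
    (hsurj : Function.Surjective vmap) (hconn : Connected ι vmap)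
    (hℓpos : ∀ h, 0 < ℓ h) (hℓsym : ∀ h, ℓ (ι h) = ℓ h) :
    Module.finrank ℝ
      (LinearMap.range ((mdivMap ι vmap ℓ).comp (asymSpace ι).subtype)) =
      Fintype.card V - 1 :=
  statement4_general ι vmap ℓ hinv hconn hℓsym
end

section
/- Let G be a finite connected multigraph with a symmetric positive length function ℓ. Suppose φ = grad(f) ∈ 𝓑 satisfies mdiv_b(φ) = 0 for every cut b, where mdiv_b(φ) = ∑_{h∈m(b)} φ(h) and m(b) is the set of minimal-length half-edges in b. Then f is constant and φ = 0; i.e., mdiv is injective on the cut space 𝓑. -/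
open PaperGraph

lemma exists_cross {H V : Type*} [DecidableEq V] (ι : H → H) (vmap : H → V)
    (S : Finset V) {a b : V}
    (hab : Relation.ReflTransGen (fun u w => ∃ h, vmap h = u ∧ vmap (ι h) = w) a b)
    (ha : a ∈ S) (hb : b ∉ S) : ∃ h, vmap h ∈ S ∧ vmap (ι h) ∉ S := by
  revert hb
  induction hab with
  | refl => exact fun hb => absurd ha hb
  | @tail c d hac hcd ih =>
    intro hb
    by_cases hc : c ∈ S
    · obtain ⟨h, h1, h2⟩ := hcd
      exact ⟨h, h1 ▸ hc, h2 ▸ hb⟩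
    · exact ih hc

/-- If `φ = grad(f)` lies in the cut space of a finite connected
multigraph with symmetric positive lengths, and `mdiv_b(φ) = 0` for every cut
`b`, then `f` is constant and `φ = 0`; i.e. `mdiv` is injective on `𝓑`. -/
theorem statement5 {H V : Type*} [Fintype H] [DecidableEq H] [Fintype V] [DecidableEq V]
    (ι : H → H) (vmap : H → V) (ℓ : H → ℝ)
    (hinv : ∀ h, ι (ι h) = h) (hfree : ∀ h, ι h ≠ h)
    (hsurj : Function.Surjective vmap) (hconn : Connected ι vmap)
    (hℓpos : ∀ h, 0 < ℓ h) (hℓsym : ∀ h, ℓ (ι h) = ℓ h)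
    (f : V → ℝ)
    (hmdiv : ∀ S : Finset V, ∑ h ∈ minCut ι vmap ℓ S, gradFun ι vmap f h = 0) :
    (∀ v w : V, f v = f w) ∧ gradFun ι vmap f = 0 := by
  classical
  suffices hconst : ∀ v w : V, f v = f w by
    refine ⟨hconst, funext fun h => ?_⟩
    simp [gradFun, hconst (vmap (ι h)) (vmap h)]
  by_contra hne
  push_neg at hne
  obtain ⟨v, w, hvw⟩ := hne
  -- S : set of maximizers of f
  set S : Finset V := Finset.univ.filter (fun u => ∀ x, f x ≤ f u) with hS
  have hSmem : ∀ u, u ∈ S ↔ ∀ x, f x ≤ f u := by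
    intro u; simp [hS]
  -- S nonempty
  have hVne : Nonempty V := ⟨v⟩
  obtain ⟨a, -, hamax⟩ := Finset.exists_max_image (Finset.univ : Finset V) f ⟨v, Finset.mem_univ v⟩
  have haS : a ∈ S := (hSmem a).2 fun x => hamax x (Finset.mem_univ x)
  -- some vertex not in S
  have hbex : ∃ b : V, b ∉ S := by
    rcases lt_or_ge (f v) (f w) with h | h
    · exact ⟨v, fun hv => absurd ((hSmem v).1 hv w) (not_le.2 h)⟩
    · have : f w < f v := lt_of_le_of_ne h fun e => hvw e.symm
      exact ⟨w, fun hw => absurd ((hSmem w).1 hw v) (not_le.2 this)⟩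
  obtain ⟨b, hbS⟩ := hbex
  -- crossing edge exists, so cutset nonempty
  obtain ⟨h0, h01, h02⟩ := exists_cross ι vmap S (hconn a b) haS hbS
  have hcut0 : h0 ∈ cutset ι vmap S := by
    simp [cutset, h01, h02]
  -- every edge in the cutset has negative gradient
  have hneg : ∀ h ∈ cutset ι vmap S, gradFun ι vmap f h < 0 := by
    intro h hh
    simp only [cutset, Finset.mem_filter] at hh
    obtain ⟨-, h1, h2⟩ := hh
    have hmax := (hSmem (vmap h)).1 h1
    have : ¬ ∀ x, f x ≤ f (vmap (ι h)) := fun hx => h2 ((hSmem _).2 hx)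
    push_neg at this
    obtain ⟨x, hx⟩ := this
    have : f (vmap (ι h)) < f (vmap h) := lt_of_lt_of_le hx (hmax x)
    simp [gradFun]; linarith
  -- minCut nonempty
  obtain ⟨h1, hh1, hh1min⟩ :=
    Finset.exists_min_image (cutset ι vmap S) ℓ ⟨h0, hcut0⟩
  have hmne : (minCut ι vmap ℓ S).Nonempty := by
    refine ⟨h1, ?_⟩
    simp only [minCut, Finset.mem_filter]
    exact ⟨hh1, hh1min⟩
  have hsub : minCut ι vmap ℓ S ⊆ cutset ι vmap S := by
    intro h hh
    simp only [minCut, Finset.mem_filter] at hh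
    exact hh.1
  have : ∑ h ∈ minCut ι vmap ℓ S, gradFun ι vmap f h < 0 :=
    Finset.sum_neg (fun h hh => hneg h (hsub hh)) hmne
  exact absurd (hmdiv S) (ne_of_lt this)
end

section
/- Let G be a finite connected multigraph with positive edge lengths and positive constants K_h > 0 with K_{-h} = K_h. Let φ° : H → ℝ be an antisymmetric phase function with cos(φ°_h) > 0 for all h (or cos(φ°_h) < 0 for all h). Then the differential of the vertical force map F^ver(φ) = (∑_{h∈m(b)} K_h sin(φ_h))_{b∈B} at φ°, restricted to the cut space 𝓑, is injective on 𝓑. -/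
open PaperGraph

private lemma cross_aux {H V : Type*} (ι : H → H) (vmap : H → V) (P : V → Prop) :
    ∀ {a b : V}, Relation.ReflTransGen (fun u w => ∃ h, vmap h = u ∧ vmap (ι h) = w) a b →
    P a → ¬ P b → ∃ h, P (vmap h) ∧ ¬ P (vmap (ι h)) := by
  intro a b hrel
  induction hrel with
  | refl => intro hp hnp; exact absurd hp hnp
  | @tail b' c hab hbc ih =>
    intro hpa hnpc
    by_cases hb : P b'
    · obtain ⟨h, hh1, hh2⟩ := hbc
      exact ⟨h, hh1 ▸ hb, hh2 ▸ hnpc⟩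
    · exact ih hpa hb


/-- If `cos(φ°_h) > 0` for all half-edges `h` (or `< 0` for all),
then the differential of the vertical force map
`F^ver(φ) = (∑_{h∈m(b)} K_h sin(φ_h))_b` at `φ°` is injective on the cut
space `𝓑`: the only `φ̇ = grad(f)` with
`∑_{h∈m(b)} K_h cos(φ°_h) φ̇_h = 0` for all cuts `b` is `φ̇ = 0`. -/
theorem statement6 {H V : Type*} [Fintype H] [DecidableEq H] [Fintype V] [DecidableEq V]
    (ι : H → H) (vmap : H → V) (ℓ K : H → ℝ) (φ₀ : H → ℝ)
    (hinv : ∀ h, ι (ι h) = h) (hfree : ∀ h, ι h ≠ h)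
    (hsurj : Function.Surjective vmap) (hconn : Connected ι vmap)
    (hℓpos : ∀ h, 0 < ℓ h) (hℓsym : ∀ h, ℓ (ι h) = ℓ h)
    (hKpos : ∀ h, 0 < K h) (hKsym : ∀ h, K (ι h) = K h)
    (hφ₀ : ∀ h, φ₀ (ι h) = - φ₀ h)
    (hcos : (∀ h, 0 < Real.cos (φ₀ h)) ∨ (∀ h, Real.cos (φ₀ h) < 0)) :
    ∀ f : V → ℝ,
      (∀ S : Finset V,
        ∑ h ∈ minCut ι vmap ℓ S, K h * Real.cos (φ₀ h) * gradFun ι vmap f h = 0) →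
      gradFun ι vmap f = 0 := by
  intro f hsum
  by_contra hg
  obtain ⟨h0, hh0⟩ : ∃ h, gradFun ι vmap f h ≠ 0 := by
    by_contra hall
    push_neg at hall
    exact hg (funext hall)
  have hne : f (vmap (ι h0)) ≠ f (vmap h0) := by
    intro he; exact hh0 (by simp [gradFun, he])
  obtain ⟨vmax, _, hmax⟩ := Finset.exists_max_image Finset.univ f ⟨vmap h0, Finset.mem_univ _⟩
  set M := f vmax with hM
  set S : Finset V := Finset.univ.filter (fun v => f v = M) with hS
  have hmemS : ∀ v, v ∈ S ↔ f v = M := by intro v; simp [hS]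
  have key : ∀ a b : V, f a < f b → a ∉ S := by
    intro a b hab hm
    have h1 : f a < M := lt_of_lt_of_le hab (hmax b (Finset.mem_univ b))
    rw [(hmemS a).mp hm] at h1; exact lt_irrefl M h1
  obtain ⟨v0, hv0⟩ : ∃ v, v ∉ S := by
    rcases lt_or_gt_of_ne hne with h | h
    · exact ⟨_, key _ _ h⟩
    · exact ⟨_, key _ _ h⟩
  obtain ⟨h1, hh1S, hh1nS⟩ :=
    cross_aux ι vmap (fun v => v ∈ S) (hconn vmax v0) ((hmemS vmax).mpr rfl) hv0
  have hcut : h1 ∈ cutset ι vmap S := by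
    simp [cutset, hh1S, hh1nS]
  obtain ⟨hm, hmcut, hmmin⟩ :=
    Finset.exists_min_image (cutset ι vmap S) ℓ ⟨h1, hcut⟩
  have hmminc : hm ∈ minCut ι vmap ℓ S := by
    simp only [minCut, Finset.mem_filter]
    exact ⟨hmcut, hmmin⟩
  have hgradneg : ∀ h ∈ minCut ι vmap ℓ S, gradFun ι vmap f h < 0 := by
    intro h hmem
    have hc : h ∈ cutset ι vmap S := by
      simp only [minCut, Finset.mem_filter] at hmem
      exact hmem.1
    simp only [cutset, Finset.mem_filter, Finset.mem_univ, true_and] at hc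
    have h2 : f (vmap h) = M := (hmemS _).mp hc.1
    have h3 : f (vmap (ι h)) < M :=
      lt_of_le_of_ne (hmax _ (Finset.mem_univ _)) (fun he => hc.2 ((hmemS _).mpr he))
    simp only [gradFun]
    linarith
  have hsumS := hsum S
  rcases hcos with hc | hc
  · have : ∑ h ∈ minCut ι vmap ℓ S, K h * Real.cos (φ₀ h) * gradFun ι vmap f h < 0 := by
      apply Finset.sum_neg
      · intro h hmem
        exact mul_neg_of_pos_of_neg (mul_pos (hKpos h) (hc h)) (hgradneg h hmem)
      · exact ⟨hm, hmminc⟩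
    linarith
  · have : 0 < ∑ h ∈ minCut ι vmap ℓ S, K h * Real.cos (φ₀ h) * gradFun ι vmap f h := by
      apply Finset.sum_pos
      · intro h hmem
        exact mul_pos_of_neg_of_neg (mul_neg_of_pos_of_neg (hKpos h) (hc h)) (hgradneg h hmem)
      · exact ⟨hm, hmminc⟩
    linarith
end

section
/- A balanced graph is a critical point of the total length functional: with 𝓛(x) = (1/2)∑_{h∈H}‖x_h‖ on antisymmetric ℝ²-valued functions, and F^hor_{b(v)}(x) = ∑_{h∈v} x_h/‖x_h‖, one has for any variation χ = grad(f) (f : V → ℝ²): D𝓛(x°)·χ = −∑_{v∈V} ⟨F^hor_{b(v)}(x°), f_v⟩. Consequently F^hor_{b(v)}(x°) = 0 for all v if and only if x° is a critical point of 𝓛 restricted to the affine subspace {x : curl(x) = curl(x°)}. -/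
/-!
Differentiating `‖x_h + t χ_h‖` at `t = 0` gives `⟪x_h/‖x_h‖, χ_h⟫`. For `χ = grad f` the two
endpoints of each edge contribute equally, because reversing a half-edge flips the sign of both
`x_h/‖x_h‖` and `χ_h`; regrouping the half-edges by their vertex gives `-∑_v ⟪F_v, f_v⟫`.
This vanishes for all `f` iff every force `F_v` vanishes (take `f = F`).
-/

open scoped RealInnerProductSpace
open Finset

section

variable {E H V : Type*} [NormedAddCommGroup E] [InnerProductSpace ℝ E]

theorem hasDerivAt_norm_add_smul {x : E} (hx : x ≠ 0) (c : E) :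
    HasDerivAt (fun t : ℝ => ‖x + t • c‖) ⟪‖x‖⁻¹ • x, c⟫ 0 := by
  have hline : HasDerivAt (fun t : ℝ => x + t • c) c 0 := by
    simpa using ((hasDerivAt_id (0 : ℝ)).smul_const c).const_add x
  have hsqrt := hline.norm_sq.sqrt (by simpa using hx)
  simp only [Real.sqrt_sq (norm_nonneg _), zero_smul, add_zero] at hsqrt
  convert hsqrt using 1
  rw [real_inner_smul_left]
  field_simp

theorem forall_sum_inner_eq_zero_iff [Fintype V] (F : V → E) :
    (∀ f : V → E, ∑ v, ⟪F v, f v⟫ = 0) ↔ ∀ v, F v = 0 := by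
  refine ⟨fun hF v => ?_, fun hF f => by simp [hF]⟩
  have hsq := (sum_eq_zero_iff_of_nonneg fun v _ => real_inner_self_nonneg).1 (hF F) v
    (mem_univ v)
  exact inner_self_eq_zero.1 hsq

theorem sum_inner_sub_comp_involutive [Fintype H] {ι : H → H} (hι : Function.Involutive ι)
    {u : H → E} (hu : ∀ h, u (ι h) = -u h) (g : H → E) :
    ∑ h, ⟪u h, g (ι h) - g h⟫ = -(2 * ∑ h, ⟪u h, g h⟫) := by
  have hreverse : ∑ h, ⟪u h, g (ι h)⟫ = -∑ h, ⟪u h, g h⟫ := by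
    rw [← Equiv.sum_comp (hι.toPerm ι) fun h => ⟪u h, g (ι h)⟫]
    simp [hι _, hu, inner_neg_left, sum_neg_distrib]
  simp only [inner_sub_right, sum_sub_distrib, hreverse]
  ring

theorem sum_inner_comp_eq_sum_fiber [Fintype H] [Fintype V] [DecidableEq V] (vmap : H → V)
    (u : H → E) (f : V → E) :
    ∑ h, ⟪u h, f (vmap h)⟫ = ∑ v, ⟪∑ h ∈ univ.filter (fun h => vmap h = v), u h, f v⟫ := by
  rw [← sum_fiberwise univ vmap]
  refine sum_congr rfl fun v _ => ?_
  rw [sum_inner]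
  exact sum_congr rfl fun h hh => by rw [(mem_filter.1 hh).2]

theorem deriv_half_sum_norm_add_smul_grad [Fintype H] [Fintype V] [DecidableEq V] {ι : H → H}
    (hι : Function.Involutive ι) (vmap : H → V) {x : H → E} (hx0 : ∀ h, x h ≠ 0)
    (hxa : ∀ h, x (ι h) = -x h) (f : V → E) :
    deriv (fun t : ℝ => (1/2) * ∑ h, ‖x h + t • (f (vmap (ι h)) - f (vmap h))‖) 0
      = -∑ v, ⟪∑ h ∈ univ.filter (fun h => vmap h = v), ‖x h‖⁻¹ • x h, f v⟫ := by
  have hderiv := (HasDerivAt.fun_sum (u := univ) fun h _ =>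
    hasDerivAt_norm_add_smul (hx0 h) (f (vmap (ι h)) - f (vmap h))).const_mul (1/2 : ℝ)
  have hunit : ∀ h, ‖x (ι h)‖⁻¹ • x (ι h) = -(‖x h‖⁻¹ • x h) := by
    simp [hxa, norm_neg]
  rw [hderiv.deriv, sum_inner_sub_comp_involutive hι hunit (fun h => f (vmap h)),
    sum_inner_comp_eq_sum_fiber vmap]
  ring

end

theorem statement9_general {H V : Type*} [Fintype H] [Fintype V] [DecidableEq V]
    (ι : H → H) (vmap : H → V)
    (hinv : ∀ h, ι (ι h) = h)
    (x : H → EuclideanSpace ℝ (Fin 2))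
    (hx0 : ∀ h, x h ≠ 0) (hxa : ∀ h, x (ι h) = - x h) :
    (∀ f : V → EuclideanSpace ℝ (Fin 2),
      deriv (fun t : ℝ =>
          (1/2) * ∑ h, ‖x h + t • (f (vmap (ι h)) - f (vmap h))‖) 0
        = - ∑ v, (inner ℝ (∑ h ∈ Finset.univ.filter (fun h => vmap h = v),
            ‖x h‖⁻¹ • x h) (f v) : ℝ)) ∧
    ((∀ v : V, ∑ h ∈ Finset.univ.filter (fun h => vmap h = v), ‖x h‖⁻¹ • x h = 0) ↔
      ∀ f : V → EuclideanSpace ℝ (Fin 2),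
        deriv (fun t : ℝ =>
            (1/2) * ∑ h, ‖x h + t • (f (vmap (ι h)) - f (vmap h))‖) 0 = 0) := by
  have hvariation := deriv_half_sum_norm_add_smul_grad hinv vmap hx0 hxa
  refine ⟨hvariation, ?_⟩
  simp only [hvariation, neg_eq_zero]
  exact (forall_sum_inner_eq_zero_iff _).symm

/-- a balanced graph is a critical point of the total length
functional: for any variation `χ = grad(f)`,
`D𝓛(x°)·χ = −∑_v ⟨F^hor_{b(v)}(x°), f_v⟩`, and consequently the horizontal
forces `F^hor_{b(v)}(x°) = ∑_{h∈v} x°_h/‖x°_h‖` all vanish iff `x°` is a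
critical point of `𝓛` restricted to the variations with vanishing periods
(which are exactly the gradient fields). -/
theorem statement9 {H V : Type*} [Fintype H] [Fintype V] [DecidableEq V]
    (ι : H → H) (vmap : H → V)
    (hinv : ∀ h, ι (ι h) = h) (hfree : ∀ h, ι h ≠ h)
    (x : H → EuclideanSpace ℝ (Fin 2))
    (hx0 : ∀ h, x h ≠ 0) (hxa : ∀ h, x (ι h) = - x h) :
    (∀ f : V → EuclideanSpace ℝ (Fin 2),
      deriv (fun t : ℝ =>
          (1/2) * ∑ h, ‖x h + t • (f (vmap (ι h)) - f (vmap h))‖) 0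
        = - ∑ v, (inner ℝ (∑ h ∈ Finset.univ.filter (fun h => vmap h = v),
            ‖x h‖⁻¹ • x h) (f v) : ℝ)) ∧
    ((∀ v : V, ∑ h ∈ Finset.univ.filter (fun h => vmap h = v), ‖x h‖⁻¹ • x h = 0) ↔
      ∀ f : V → EuclideanSpace ℝ (Fin 2),
        deriv (fun t : ℝ =>
            (1/2) * ∑ h, ‖x h + t • (f (vmap (ι h)) - f (vmap h))‖) 0 = 0) :=
  statement9_general ι vmap hinv x hx0 hxa
end
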